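/- Let s_A be a Player A strategy in a finite concurrent reachability game that is optimal from a state q. Then for every relevant path π = π'·q' ∈ RP_{s_A}(q): (i) the local strategy s_A(π) is optimal in the game ⟨F_{q'}, μ_m⟩, i.e. s_A(π) ∈ Opt_A(⟨F_{q'}, μ_m⟩); and (ii) for every optimal action b ∈ B_{s_A(π)} and every state q'' with p_{q',q''}(s_A(π), b) > 0, the residual strategy s_A^π is optimal from q'': val(s_A^π)(q'') = val(q''). -/

import Mathlib

open scoped BigOperators Classical

noncomputable section

/-- A probability distribution on a finite type. -/
def FDist (X : Type) [Fintype X] : Type :=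
  { p : X → ℝ // (∀ x, 0 ≤ p x) ∧ ∑ x, p x = 1 }

namespace CRG

variable {A B Q D : Type} [Fintype A] [Fintype B] [Fintype Q] [Fintype D]

/-- The support of a distribution. -/
def supp {X : Type} [Fintype X] (σ : FDist X) : Set X := { x | σ.1 x ≠ 0 }

/-- The Dirac distribution. -/
def dirac {X : Type} [Fintype X] [DecidableEq X] (x : X) : FDist X :=
  ⟨fun y => if y = x then 1 else 0, by
    constructor
    · intro y
      dsimp only
      split <;> norm_num
    · simp⟩

/-- Outcome of a pair of mixed strategies in the game in normal form with payoff `u`. -/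
def out (u : A → B → ℝ) (σA : FDist A) (σB : FDist B) : ℝ :=
  ∑ a, ∑ b, σA.1 a * σB.1 b * u a b

/-- Outcome of a mixed strategy of Player A against a pure action of Player B. -/
def outB (u : A → B → ℝ) (σA : FDist A) (b : B) : ℝ :=
  ∑ a, σA.1 a * u a b

/-- The value of a Player A mixed strategy in a game in normal form. -/
def valStratGF (u : A → B → ℝ) (σA : FDist A) : ℝ :=
  ⨅ σB : FDist B, out u σA σB

/-- The (von Neumann) value of a finite game in normal form. -/
def valGF (u : A → B → ℝ) : ℝ :=
  ⨆ σA : FDist A, valStratGF u σA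

/-- The optimal Player A mixed strategies in a game in normal form. -/
def OptA (u : A → B → ℝ) : Set (FDist A) := { σA | valStratGF u σA = valGF u }

/-- The optimal actions of Player B against the Player A mixed strategy `σA`. -/
def optActs (u : A → B → ℝ) (σA : FDist A) : Set B :=
  { b | outB u σA b = valStratGF u σA }

/-- μ_v : the lift of a valuation of the states to the Nature states. -/
def lift (dist : D → FDist Q) (v : Q → ℝ) (d : D) : ℝ := ∑ q, (dist d).1 q * v q

/-- The payoff function of the local interaction `F_q` valued by `μ_m`. -/
def locPay (δ : Q → A → B → D) (dist : D → FDist Q) (m : Q → ℝ) (q : Q) : A → B → ℝ :=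
  fun a b => lift dist m (δ q a b)

/-- One-step transition probability between states. -/
def step (δ : Q → A → B → D) (dist : D → FDist Q) (σA : FDist A) (σB : FDist B)
    (q q' : Q) : ℝ :=
  ∑ a, ∑ b, σA.1 a * σB.1 b * (dist (δ q a b)).1 q'

/-- The operator Δ on valuations of the states. -/
def Δop (δ : Q → A → B → D) (dist : D → FDist Q) (T : Q) (v : Q → ℝ) : Q → ℝ :=
  fun q => if q = T then 1 else valGF (fun a b => lift dist v (δ q a b))

/-- The target `T` is an absorbing (self-looping) sink. -/
def Absorbing (δ : Q → A → B → D) (dist : D → FDist Q) (T : Q) : Prop :=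
  ∀ a b, (dist (δ T a b)).1 = fun q => if q = T then 1 else 0

/-- `m` is the least fixed point of Δ on `[0,1]^Q`. -/
def IsLfpDelta (δ : Q → A → B → D) (dist : D → FDist Q) (T : Q) (m : Q → ℝ) : Prop :=
  (∀ q, m q ∈ Set.Icc (0:ℝ) 1) ∧ Δop δ dist T m = m ∧
    ∀ v : Q → ℝ, (∀ q, v q ∈ Set.Icc (0:ℝ) 1) → Δop δ dist T v = v → ∀ q, m q ≤ v q

/-- A strategy: a history of past states together with the current state gives a
mixed action.  (This encodes maps `Q⁺ → 𝒟(X)`.) -/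
def Strat (Q X : Type) [Fintype X] : Type := List Q → Q → FDist X

/-- Residual strategy after the history `π` has been played. -/
def residual {X : Type} [Fintype X] (s : Strat Q X) (π : List Q) : Strat Q X :=
  fun h q => s (π ++ h) q

/-- The (positional) strategy associated with a per-state choice of mixed actions. -/
def ofPos {X : Type} [Fintype X] (s : Q → FDist X) : Strat Q X := fun _ q => s q

/-- Probability of reaching the set `S` within `n` steps from current state `q`,
history `h` having been played. -/
def reachSetNAux (δ : Q → A → B → D) (dist : D → FDist Q) (S : Set Q) :
    ℕ → Strat Q A → Strat Q B → List Q → Q → ℝ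
  | 0, _, _, _, q => if q ∈ S then 1 else 0
  | n + 1, sA, sB, h, q =>
      if q ∈ S then 1
      else ∑ q', step δ dist (sA h q) (sB h q) q q' *
        reachSetNAux δ dist S n sA sB (h ++ [q]) q'

/-- Probability of reaching the set `S` within `n` steps from state `q`. -/
def reachSetN (δ : Q → A → B → D) (dist : D → FDist Q) (S : Set Q) (n : ℕ)
    (sA : Strat Q A) (sB : Strat Q B) (q : Q) : ℝ :=
  reachSetNAux δ dist S n sA sB [] q

/-- Probability of reaching the target `T` within `n` steps from state `q`. -/
def reachN (δ : Q → A → B → D) (dist : D → FDist Q) (T : Q) (n : ℕ)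
    (sA : Strat Q A) (sB : Strat Q B) (q : Q) : ℝ :=
  reachSetN δ dist {T} n sA sB q

/-- Probability of eventually reaching the target `T` from state `q`. -/
def reach (δ : Q → A → B → D) (dist : D → FDist Q) (T : Q)
    (sA : Strat Q A) (sB : Strat Q B) (q : Q) : ℝ :=
  ⨆ n : ℕ, reachN δ dist T n sA sB q

/-- The value of a Player A strategy from state `q`. -/
def valA (δ : Q → A → B → D) (dist : D → FDist Q) (T : Q) (sA : Strat Q A) (q : Q) : ℝ :=
  ⨅ sB : Strat Q B, reach δ dist T sA sB q

/-- The value of the game from state `q`. -/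
def value (δ : Q → A → B → D) (dist : D → FDist Q) (T : Q) (q : Q) : ℝ :=
  ⨆ sA : Strat Q A, valA δ dist T sA q

/-- A state is maximizable when Player A has an optimal strategy from it. -/
def Maximizable (δ : Q → A → B → D) (dist : D → FDist Q) (T q : Q) : Prop :=
  ∃ sA : Strat Q A, valA δ dist T sA q = value δ dist T q

/-- A positional Player A strategy locally dominates the valuation `v`. -/
def LocallyDominates (δ : Q → A → B → D) (dist : D → FDist Q)
    (sA : Q → FDist A) (v : Q → ℝ) : Prop :=
  ∀ q, v q ≤ valStratGF (fun a b => lift dist v (δ q a b)) (sA q)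

/-- Transition function ι of the MDP induced by a positional Player A strategy. -/
def stepB [DecidableEq B] (δ : Q → A → B → D) (dist : D → FDist Q)
    (sA : Q → FDist A) (q : Q) (b : B) (q' : Q) : ℝ :=
  step δ dist (sA q) (dirac b) q q'

/-- An end component of the MDP induced by the positional Player A strategy `sA`. -/
structure EndComp [DecidableEq B] (δ : Q → A → B → D) (dist : D → FDist Q)
    (sA : Q → FDist A) where
  states : Set Q
  acts : Q → Set B
  acts_nonempty : ∀ q ∈ states, (acts q).Nonempty
  closed : ∀ q ∈ states, ∀ b ∈ acts q, ∀ q', stepB δ dist sA q b q' ≠ 0 → q' ∈ states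
  connected : ∀ q ∈ states, ∀ q' ∈ states,
    Relation.ReflTransGen
      (fun x y => x ∈ states ∧ ∃ b ∈ acts x, stepB δ dist sA x b y ≠ 0) q q'

/-- `S_D` : the Nature states having a non-zero probability to reach `S`. -/
def natS (dist : D → FDist Q) (S : Set Q) : Set D :=
  { d | ∃ q ∈ S, (dist d).1 q ≠ 0 }

/-- Progressive optimal local strategies at `q` w.r.t. the set `Gd`. -/
def Prog (δ : Q → A → B → D) (dist : D → FDist Q) (m : Q → ℝ) (q : Q)
    (Gd : Set Q) : Set (FDist A) :=
  { σA | σA ∈ OptA (locPay δ dist m q) ∧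
      ∀ b ∈ optActs (locPay δ dist m q) σA, ∃ a ∈ supp σA, δ q a b ∈ natS dist Gd }

/-- Risky optimal local strategies at `q` w.r.t. the set `Bd`. -/
def Risk (δ : Q → A → B → D) (dist : D → FDist Q) (m : Q → ℝ) (q : Q)
    (Bd : Set Q) : Set (FDist A) :=
  { σA | σA ∈ OptA (locPay δ dist m q) ∧
      ∃ b ∈ optActs (locPay δ dist m q) σA, ∃ a ∈ supp σA, δ q a b ∈ natS dist Bd }

/-- Efficient local strategies: progressive and not risky. -/
def Eff (δ : Q → A → B → D) (dist : D → FDist Q) (m : Q → ℝ) (q : Q)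
    (Gd Bd : Set Q) : Set (FDist A) :=
  Prog δ dist m q Gd \ Risk δ dist m q Bd

/-- The increasing sequence of sets of secure states w.r.t. `Bd`. -/
def SecN (δ : Q → A → B → D) (dist : D → FDist Q) (m : Q → ℝ) (T : Q) (Bd : Set Q) :
    ℕ → Set Q
  | 0 => {T}
  | n + 1 => SecN δ dist m T Bd n ∪
      { q | q ∉ Bd ∧ (Eff δ dist m q (SecN δ dist m T Bd n) Bd).Nonempty }

/-- The set of secure states w.r.t. `Bd`. -/
def Sec (δ : Q → A → B → D) (dist : D → FDist Q) (m : Q → ℝ) (T : Q) (Bd : Set Q) :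
    Set Q :=
  (⋃ n : ℕ, SecN δ dist m T Bd n) ∪ { q | m q = 0 }

/-- The sequence of sets of bad states. -/
def BadN (δ : Q → A → B → D) (dist : D → FDist Q) (m : Q → ℝ) (T : Q) : ℕ → Set Q
  | 0 => ∅
  | n + 1 => (Sec δ dist m T (BadN δ dist m T n))ᶜ

/-- The set of bad states. -/
def Bad (δ : Q → A → B → D) (dist : D → FDist Q) (m : Q → ℝ) (T : Q) : Set Q :=
  BadN δ dist m T (Fintype.card Q)

/-- `α[y]` : the total valuation extending the partial valuation `α : O∖E → [0,1]`
with the value `y` on `E`. -/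
def extendVal {O : Type} (E : Set O) (α : O → ℝ) (y : ℝ) : O → ℝ :=
  fun o => if o ∈ E then y else α o

/-- The map `f_α : y ↦ val_{⟨F, α[y]⟩}`. -/
def fval {O : Type} (ρ : A → B → O) (E : Set O) (α : O → ℝ) (y : ℝ) : ℝ :=
  valGF (fun a b => extendVal E α y (ρ a b))

/-- `v` is the least fixed point of `f_α` on `[0,1]`. -/
def IsLfpVal {O : Type} (ρ : A → B → O) (E : Set O) (α : O → ℝ) (v : ℝ) : Prop :=
  v ∈ Set.Icc (0:ℝ) 1 ∧ fval ρ E α v = v ∧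
    ∀ y ∈ Set.Icc (0:ℝ) 1, fval ρ E α y = y → v ≤ y

/-- The game form `ρ` is reach-maximizable w.r.t. the partial valuation `α : O∖E → [0,1]`. -/
def RMwrt {O : Type} (ρ : A → B → O) (E : Set O) (α : O → ℝ) : Prop :=
  ∀ v : ℝ, IsLfpVal ρ E α v →
    v = 0 ∨
      ∃ σA ∈ OptA (fun a b => extendVal E α v (ρ a b)),
        ∀ b ∈ optActs (fun a b => extendVal E α v (ρ a b)) σA,
          ∃ a ∈ supp σA, ρ a b ∉ E

/-- A reach-maximizable game form: RM w.r.t. every partial valuation of its outcomes. -/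
def RMform {O : Type} (ρ : A → B → O) : Prop :=
  ∀ (E : Set O) (α : O → ℝ), (∀ o ∉ E, α o ∈ Set.Icc (0:ℝ) 1) → RMwrt ρ E α

/-- A determined game form. -/
def Determined {O : Type} (ρ : A → B → O) : Prop :=
  ∀ E : Set O, (∃ a, ∀ b, ρ a b ∈ E) ∨ (∃ b, ∀ a, ρ a b ∉ E)

/-- Transition function of the three-state reachability game `C_{(F,α)}`:
state `0` is `q₀`, state `1` is the target `⊤`, state `2` is the bin `⊥`. -/
def triδ {O : Type} (ρ : A → B → O) (E : Set O) :
    Fin 3 → A → B → (Fin 3 ⊕ {o : O // o ∉ E}) :=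
  fun s a b =>
    if s = 0 then
      if h : ρ a b ∈ E then Sum.inl 0 else Sum.inr ⟨ρ a b, h⟩
    else Sum.inl s

/-- Nature distributions of the three-state reachability game `C_{(F,α)}`. -/
def triDist {O : Type} (E : Set O) (α : O → ℝ)
    (hα : ∀ o ∉ E, α o ∈ Set.Icc (0:ℝ) 1) :
    (Fin 3 ⊕ {o : O // o ∉ E}) → FDist (Fin 3) := fun d =>
  match d with
  | Sum.inl t => dirac t
  | Sum.inr x =>
      ⟨![0, α x.1, 1 - α x.1], by
        obtain ⟨h0, h1⟩ := hα x.1 x.2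
        constructor
        · intro s
          fin_cases s <;> simp <;> linarith
        · simp [Fin.sum_univ_three]⟩

/-- An abstract (finite) game form with actions `A` and `B`. -/
structure GameForm (A B : Type) where
  O : Type
  fin : Fintype O
  ρ : A → B → O

/-- All local interactions of the arena `δ` belong to the set `𝒢` of game forms
(up to a renaming of the outcomes into Nature states). -/
def UsesForms {Q D : Type} (𝒢 : Set (GameForm A B)) (δ : Q → A → B → D) : Prop :=
  ∀ q, ∃ F ∈ 𝒢, ∃ g : F.O → D, δ q = fun a b => g (F.ρ a b)

/-- The sequence of iterates of Δ starting from the valuation `1_{⊤}`. -/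
def vseq (δ : Q → A → B → D) (dist : D → FDist Q) (T : Q) : ℕ → Q → ℝ
  | 0 => fun q => if q = T then 1 else 0
  | n + 1 => Δop δ dist T (vseq δ dist T n)

/-- Relevant paths w.r.t. the strategy `sA` from the state `q₀`: the pair `(h, q)`
encodes the path `h · q` (history `h`, current state `q`). -/
inductive Relevant [DecidableEq B] (δ : Q → A → B → D) (dist : D → FDist Q)
    (m : Q → ℝ) (sA : Strat Q A) (q₀ : Q) : List Q → Q → Prop
  | base : Relevant δ dist m sA q₀ [] q₀
  | step {h : List Q} {q q' : Q} :
      Relevant δ dist m sA q₀ h q →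
      (∃ b ∈ optActs (locPay δ dist m q) (sA h q),
        0 < CRG.step δ dist (sA h q) (dirac b) q q') →
      Relevant δ dist m sA q₀ (h ++ [q]) q'

end CRG

/-!
Let `m` be the least fixed point of `Δ`; it is the value of the game. Against any strategy,
Player B stays below every nonnegative pre-fixed point of `Δ` by answering each local move with a
pure best response in `⟨F_q, μ_v⟩`; conversely, Player A approaches every iterate `Δⁿ(1_⊤)` with a
finite-horizon strategy, and the supremum of these iterates is a fixed point.

Player B may also play an arbitrary mixed action first and then respond almost optimally from the
successor, so the value of a strategy at `q ≠ ⊤` is at most the expected value of its residual at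
the successors, hence at most the expected `m`. If the strategy still guarantees `m q`, its local
move guarantees `m q = val⟨F_q, μ_m⟩` against every `σB` and is optimal; against an optimal action
`b` the expected `m` of the successors is exactly `m q`, so no successor reached with positive
probability can lose value. At the absorbing target `μ_m` is constant. Induction along the
relevant path concludes.
-/

theorem FDist.nonneg {X : Type} [Fintype X] (σ : FDist X) (x : X) : 0 ≤ σ.1 x := σ.2.1 x

theorem FDist.sum_eq_one {X : Type} [Fintype X] (σ : FDist X) : ∑ x, σ.1 x = 1 := σ.2.2

namespace CRG

open Finset

instance {X : Type} [Fintype X] [Nonempty X] : Nonempty (FDist X) :=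
  ⟨dirac (Classical.arbitrary X)⟩

instance {Q X : Type} [Fintype X] [Nonempty X] : Nonempty (Strat Q X) :=
  ⟨fun _ _ => Classical.arbitrary _⟩

section WeightedSum

variable {X : Type} [Fintype X] {w f g : X → ℝ}

theorem sum_mul_mono (hw : ∀ x, 0 ≤ w x) (hfg : ∀ x, f x ≤ g x) :
    ∑ x, w x * f x ≤ ∑ x, w x * g x :=
  sum_le_sum fun x _ => mul_le_mul_of_nonneg_left (hfg x) (hw x)

theorem sum_mul_const (hs : ∑ x, w x = 1) (c : ℝ) : ∑ x, w x * c = c := by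
  rw [← sum_mul, hs, one_mul]

theorem sum_mul_add_const (hs : ∑ x, w x = 1) (c : ℝ) :
    ∑ x, w x * (f x + c) = ∑ x, w x * f x + c := by
  simp only [mul_add, sum_add_distrib, sum_mul_const hs]

theorem sum_mul_le_of_le (hw : ∀ x, 0 ≤ w x) (hs : ∑ x, w x = 1) {c : ℝ}
    (hf : ∀ x, f x ≤ c) : ∑ x, w x * f x ≤ c :=
  (sum_mul_mono hw hf).trans (sum_mul_const hs c).le

theorem le_sum_mul_of_le (hw : ∀ x, 0 ≤ w x) (hs : ∑ x, w x = 1) {c : ℝ}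
    (hf : ∀ x, c ≤ f x) : c ≤ ∑ x, w x * f x :=
  (sum_mul_const hs c).ge.trans (sum_mul_mono hw hf)

theorem le_of_sum_mul_le (hw : ∀ x, 0 ≤ w x) (hfg : ∀ x, f x ≤ g x)
    (h : ∑ x, w x * g x ≤ ∑ x, w x * f x) {x : X} (hx : 0 < w x) : g x ≤ f x := by
  by_contra! hlt
  have := sum_lt_sum (fun y _ => mul_le_mul_of_nonneg_left (hfg y) (hw y))
    ⟨x, mem_univ x, mul_lt_mul_of_pos_left hlt hx⟩
  linarith

end WeightedSum

section NormalForm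

variable {A B : Type} [Fintype A]

theorem outB_le_add {u u' : A → B → ℝ} {c : ℝ} (h : ∀ a b, u a b ≤ u' a b + c)
    (σA : FDist A) (b : B) : outB u σA b ≤ outB u' σA b + c :=
  (sum_mul_mono σA.nonneg fun a => h a b).trans (sum_mul_add_const σA.sum_eq_one c).le

variable [Fintype B]

theorem out_eq_sum_outB (u : A → B → ℝ) (σA : FDist A) (σB : FDist B) :
    out u σA σB = ∑ b, σB.1 b * outB u σA b := by
  rw [out, sum_comm]
  refine sum_congr rfl fun b _ => ?_
  rw [outB, mul_sum]
  exact sum_congr rfl fun a _ => by ring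

theorem out_dirac [DecidableEq B] (u : A → B → ℝ) (σA : FDist A) (b : B) :
    out u σA (dirac b) = outB u σA b := by
  rw [out_eq_sum_outB]
  simp [dirac]

variable [Nonempty B]

theorem valStratGF_eq_inf' (u : A → B → ℝ) (σA : FDist A) :
    valStratGF u σA = univ.inf' univ_nonempty (outB u σA) := by
  have hle : ∀ σB, univ.inf' univ_nonempty (outB u σA) ≤ out u σA σB := fun σB => by
    rw [out_eq_sum_outB]
    exact le_sum_mul_of_le σB.nonneg σB.sum_eq_one fun b => inf'_le _ (mem_univ b)
  obtain ⟨b, -, hb⟩ := exists_mem_eq_inf' univ_nonempty (outB u σA)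
  refine le_antisymm ?_ (le_ciInf hle)
  rw [hb, ← out_dirac]
  exact ciInf_le ⟨_, Set.forall_mem_range.2 hle⟩ _

theorem valStratGF_le_outB (u : A → B → ℝ) (σA : FDist A) (b : B) :
    valStratGF u σA ≤ outB u σA b := by
  rw [valStratGF_eq_inf']
  exact inf'_le _ (mem_univ b)

theorem exists_outB_eq_valStratGF (u : A → B → ℝ) (σA : FDist A) :
    ∃ b, outB u σA b = valStratGF u σA := by
  obtain ⟨b, -, hb⟩ := exists_mem_eq_inf' univ_nonempty (outB u σA)
  exact ⟨b, by rw [valStratGF_eq_inf', hb]⟩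

theorem valStratGF_le_out (u : A → B → ℝ) (σA : FDist A) (σB : FDist B) :
    valStratGF u σA ≤ out u σA σB := by
  rw [out_eq_sum_outB]
  exact le_sum_mul_of_le σB.nonneg σB.sum_eq_one (valStratGF_le_outB u σA)

theorem valStratGF_const {u : A → B → ℝ} {c : ℝ} (hu : ∀ a b, u a b = c) (σA : FDist A) :
    valStratGF u σA = c := by
  have hout : ∀ b, outB u σA b = c := fun b => by
    simp only [outB, hu, sum_mul_const σA.sum_eq_one]
  obtain ⟨b, hb⟩ := exists_outB_eq_valStratGF u σA
  rw [← hb, hout]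

variable [Nonempty A]

theorem bddAbove_range_valStratGF (u : A → B → ℝ) : BddAbove (Set.range (valStratGF u)) := by
  let b := Classical.arbitrary B
  refine ⟨univ.sup' univ_nonempty (u · b), Set.forall_mem_range.2 fun σA => ?_⟩
  exact (valStratGF_le_outB u σA b).trans
    (sum_mul_le_of_le σA.nonneg σA.sum_eq_one fun a => le_sup' (u · b) (mem_univ a))

theorem valStratGF_le_valGF (u : A → B → ℝ) (σA : FDist A) : valStratGF u σA ≤ valGF u :=
  le_ciSup (bddAbove_range_valStratGF u) σA

theorem valGF_le_add {u u' : A → B → ℝ} {c : ℝ} (h : ∀ a b, u a b ≤ u' a b + c) :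
    valGF u ≤ valGF u' + c := by
  refine ciSup_le fun σA => ?_
  obtain ⟨b, hb⟩ := exists_outB_eq_valStratGF u' σA
  calc valStratGF u σA ≤ outB u σA b := valStratGF_le_outB u σA b
    _ ≤ outB u' σA b + c := outB_le_add h σA b
    _ ≤ valGF u' + c := by rw [hb]; gcongr; exact valStratGF_le_valGF u' σA

theorem valGF_mono {u u' : A → B → ℝ} (h : ∀ a b, u a b ≤ u' a b) : valGF u ≤ valGF u' := by
  simpa using valGF_le_add (c := 0) (by simpa using h)

theorem valGF_const {u : A → B → ℝ} {c : ℝ} (hu : ∀ a b, u a b = c) : valGF u = c := by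
  simp only [valGF, valStratGF_const hu, ciSup_const]

theorem valGF_mem_Icc {u : A → B → ℝ} (hu : ∀ a b, u a b ∈ Set.Icc (0:ℝ) 1) :
    valGF u ∈ Set.Icc (0:ℝ) 1 :=
  ⟨(valGF_const (u := fun _ _ => 0) fun _ _ => rfl).ge.trans (valGF_mono fun a b => (hu a b).1),
   (valGF_mono fun a b => (hu a b).2).trans (valGF_const (u := fun _ _ => 1) fun _ _ => rfl).le⟩

end NormalForm

section Arena

variable {A B Q D : Type} [Fintype Q] (δ : Q → A → B → D) (dist : D → FDist Q)

theorem lift_of_absorbing {T : Q} (habs : Absorbing δ dist T) (v : Q → ℝ) (a : A) (b : B) :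
    lift dist v (δ T a b) = v T := by
  simp [lift, habs a b]

theorem lift_mem_Icc {v : Q → ℝ} (hv : ∀ q, v q ∈ Set.Icc (0:ℝ) 1) (d : D) :
    lift dist v d ∈ Set.Icc (0:ℝ) 1 :=
  ⟨le_sum_mul_of_le (dist d).nonneg (dist d).sum_eq_one fun q => (hv q).1,
   sum_mul_le_of_le (dist d).nonneg (dist d).sum_eq_one fun q => (hv q).2⟩

theorem lift_le_add {v w : Q → ℝ} {c : ℝ} (h : ∀ q, v q ≤ w q + c) (d : D) :
    lift dist v d ≤ lift dist w d + c :=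
  (sum_mul_mono (dist d).nonneg h).trans (sum_mul_add_const (dist d).sum_eq_one c).le

variable [Fintype A] [Fintype B]

theorem step_nonneg (σA : FDist A) (σB : FDist B) (q q' : Q) :
    0 ≤ step δ dist σA σB q q' :=
  sum_nonneg fun a _ => sum_nonneg fun b _ =>
    mul_nonneg (mul_nonneg (σA.nonneg a) (σB.nonneg b)) ((dist _).nonneg q')

theorem sum_step_mul (σA : FDist A) (σB : FDist B) (q : Q) (v : Q → ℝ) :
    ∑ q', step δ dist σA σB q q' * v q' = out (locPay δ dist v q) σA σB := by
  simp only [step, out, locPay, lift, sum_mul, mul_sum]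
  rw [sum_comm]
  refine sum_congr rfl fun a _ => ?_
  rw [sum_comm]
  exact sum_congr rfl fun b _ => sum_congr rfl fun q' _ => by ring

theorem sum_step (σA : FDist A) (σB : FDist B) (q : Q) : ∑ q', step δ dist σA σB q q' = 1 := by
  have hpay : ∀ a b, locPay δ dist (fun _ => 1) q a b = 1 := fun a b =>
    sum_mul_const (dist _).sum_eq_one 1
  have h := sum_step_mul δ dist σA σB q fun _ => 1
  simp only [mul_one] at h
  simp only [h, out_eq_sum_outB, outB, hpay, sum_mul_const σA.sum_eq_one,
    sum_mul_const σB.sum_eq_one]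

theorem eq_of_step_pos_of_absorbing {T : Q} (habs : Absorbing δ dist T) {σA : FDist A}
    {σB : FDist B} {q' : Q} (h : 0 < step δ dist σA σB T q') : q' = T := by
  by_contra hne
  have hzero : ∀ a b, (dist (δ T a b)).1 q' = 0 := fun a b => by simp [habs a b, hne]
  simp [step, hzero] at h

variable (T : Q)

theorem Δop_of_ne {v : Q → ℝ} {q : Q} (hq : q ≠ T) :
    Δop δ dist T v q = valGF (locPay δ dist v q) :=
  if_neg hq

variable [Nonempty A] [Nonempty B]

theorem Δop_le_add {v w : Q → ℝ} {c : ℝ} (hc : 0 ≤ c) (h : ∀ q, v q ≤ w q + c) (q : Q) :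
    Δop δ dist T v q ≤ Δop δ dist T w q + c := by
  by_cases hq : q = T
  · simp [Δop, hq, hc]
  · rw [Δop_of_ne δ dist T hq, Δop_of_ne δ dist T hq]
    exact valGF_le_add fun a b => lift_le_add dist h _

theorem Δop_mono {v w : Q → ℝ} (h : v ≤ w) : Δop δ dist T v ≤ Δop δ dist T w := fun q => by
  simpa using Δop_le_add δ dist T le_rfl (fun q => by simpa using h q) q

theorem Δop_mem_Icc {v : Q → ℝ} (hv : ∀ q, v q ∈ Set.Icc (0:ℝ) 1) (q : Q) :
    Δop δ dist T v q ∈ Set.Icc (0:ℝ) 1 := by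
  by_cases hq : q = T
  · simp [Δop, hq]
  · rw [Δop_of_ne δ dist T hq]
    exact valGF_mem_Icc fun a b => lift_mem_Icc dist hv _

end Arena

section Reach

variable {A B Q D : Type} [Fintype A] [Fintype B] [Fintype Q]
  (δ : Q → A → B → D) (dist : D → FDist Q)

theorem reachSetNAux_mem_Icc (S : Set Q) (sA : Strat Q A) (sB : Strat Q B) :
    ∀ n h q, reachSetNAux δ dist S n sA sB h q ∈ Set.Icc (0:ℝ) 1
  | 0, h, q => by simp only [reachSetNAux]; split <;> norm_num
  | n + 1, h, q => by
      simp only [reachSetNAux]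
      split
      · norm_num
      · have hw := step_nonneg δ dist (sA h q) (sB h q) q
        have hs := sum_step δ dist (sA h q) (sB h q) q
        have ih := reachSetNAux_mem_Icc S sA sB n (h ++ [q])
        exact ⟨le_sum_mul_of_le hw hs fun q' => (ih q').1,
          sum_mul_le_of_le hw hs fun q' => (ih q').2⟩

theorem reachSetNAux_append (S : Set Q) (sA : Strat Q A) (sB : Strat Q B) :
    ∀ n h₀ h q, reachSetNAux δ dist S n sA sB (h₀ ++ h) q =
      reachSetNAux δ dist S n (residual sA h₀) (residual sB h₀) h q
  | 0, _, _, _ => rfl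
  | n + 1, h₀, h, q => by
      simp only [reachSetNAux]
      refine if_congr Iff.rfl rfl (sum_congr rfl fun q' _ => ?_)
      rw [List.append_assoc, reachSetNAux_append S sA sB n h₀ (h ++ [q]) q']
      rfl

variable (T : Q)

theorem reachN_target (n : ℕ) (sA : Strat Q A) (sB : Strat Q B) :
    reachN δ dist T n sA sB T = 1 := by
  cases n <;> simp [reachN, reachSetN, reachSetNAux]

theorem reachN_zero_of_ne {q : Q} (hq : q ≠ T) (sA : Strat Q A) (sB : Strat Q B) :
    reachN δ dist T 0 sA sB q = 0 := by
  simp [reachN, reachSetN, reachSetNAux, hq]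

theorem reachN_succ_of_ne {q : Q} (hq : q ≠ T) (n : ℕ) (sA : Strat Q A) (sB : Strat Q B) :
    reachN δ dist T (n + 1) sA sB q = ∑ q', step δ dist (sA [] q) (sB [] q) q q' *
      reachN δ dist T n (residual sA [q]) (residual sB [q]) q' := by
  simp only [reachN, reachSetN, reachSetNAux, Set.mem_singleton_iff, hq, if_false]
  refine sum_congr rfl fun q' _ => ?_
  rw [← reachSetNAux_append, List.append_nil, List.nil_append]

theorem reachN_le_reach (n : ℕ) (sA : Strat Q A) (sB : Strat Q B) (q : Q) :
    reachN δ dist T n sA sB q ≤ reach δ dist T sA sB q :=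
  le_ciSup ⟨1, Set.forall_mem_range.2 fun n => (reachSetNAux_mem_Icc δ dist _ sA sB n [] q).2⟩ n

theorem reach_nonneg (sA : Strat Q A) (sB : Strat Q B) (q : Q) :
    0 ≤ reach δ dist T sA sB q :=
  (reachSetNAux_mem_Icc δ dist _ sA sB 0 [] q).1.trans (reachN_le_reach δ dist T 0 sA sB q)

theorem reach_le_sum_step_mul_reach {q : Q} (hq : q ≠ T) (sA : Strat Q A) (sB : Strat Q B) :
    reach δ dist T sA sB q ≤ ∑ q', step δ dist (sA [] q) (sB [] q) q q' *
      reach δ dist T (residual sA [q]) (residual sB [q]) q' := by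
  refine ciSup_le fun n => ?_
  cases n with
  | zero =>
    rw [reachN_zero_of_ne δ dist T hq]
    exact sum_nonneg fun q' _ => mul_nonneg (step_nonneg δ dist _ _ q q') (reach_nonneg ..)
  | succ n =>
    rw [reachN_succ_of_ne δ dist T hq]
    exact sum_mul_mono (step_nonneg δ dist _ _ q) fun q' => reachN_le_reach ..

theorem valA_le_reach (sA : Strat Q A) (sB : Strat Q B) (q : Q) :
    valA δ dist T sA q ≤ reach δ dist T sA sB q :=
  ciInf_le ⟨0, Set.forall_mem_range.2 fun sB => reach_nonneg δ dist T sA sB q⟩ sB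

variable [Nonempty B]

theorem valA_le_value (sA : Strat Q A) (q : Q) : valA δ dist T sA q ≤ value δ dist T q := by
  refine le_ciSup (f := fun sA => valA δ dist T sA q) ⟨1, Set.forall_mem_range.2 fun sA' => ?_⟩ sA
  exact (valA_le_reach δ dist T sA' (Classical.arbitrary _) q).trans
    (ciSup_le fun n => (reachSetNAux_mem_Icc δ dist _ sA' _ n [] q).2)

theorem valA_target (sA : Strat Q A) : valA δ dist T sA T = 1 := by
  refine le_antisymm ((valA_le_reach δ dist T sA (Classical.arbitrary _) T).trans
    (ciSup_le fun n => (reachN_target δ dist T n sA _).le)) (le_ciInf fun sB => ?_)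
  exact (reachN_target δ dist T 0 sA sB).ge.trans (reachN_le_reach δ dist T 0 sA sB T)

end Reach

section Splice

variable {Q X : Type} [Fintype X]

def stratCons (σ : Q → FDist X) (s : Strat Q X) : Strat Q X
  | [], q => σ q
  | _ :: h, q => s h q

theorem residual_stratCons (σ : Q → FDist X) (s : Strat Q X) (q : Q) :
    residual (stratCons σ s) [q] = s :=
  rfl

-- `h.headD q` is the first state of the path `h · q`.
def byStart (s : Q → Strat Q X) : Strat Q X := fun h q => s (h.headD q) h q

theorem residual_residual (s : Strat Q X) (h h' : List Q) :
    residual (residual s h) h' = residual s (h ++ h') := by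
  funext h'' q
  simp [residual]

theorem residual_apply_nil (s : Strat Q X) (h : List Q) (q : Q) : residual s h [] q = s h q := by
  simp [residual]

end Splice

section Value

variable {A B Q D : Type} [Fintype A] [Fintype B] [Fintype Q]
  (δ : Q → A → B → D) (dist : D → FDist Q) (T : Q)

theorem reachSetNAux_byStart (S : Set Q) (sA : Strat Q A) (sB : Q → Strat Q B) :
    ∀ n h q, reachSetNAux δ dist S n sA (byStart sB) h q =
      reachSetNAux δ dist S n sA (sB (h.headD q)) h q
  | 0, _, _ => rfl
  | n + 1, h, q => by
      have hhead : ∀ q', (h ++ [q]).headD q' = h.headD q := fun q' => by cases h <;> rfl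
      simp only [reachSetNAux, reachSetNAux_byStart S sA sB n (h ++ [q]), hhead]
      rfl

theorem reach_byStart (sA : Strat Q A) (sB : Q → Strat Q B) (q : Q) :
    reach δ dist T sA (byStart sB) q = reach δ dist T sA (sB q) q := by
  simp only [reach, reachN, reachSetN, reachSetNAux_byStart, List.headD_nil]

variable [Nonempty B]

theorem valA_le_sum_step_mul_valA_residual {q : Q} (hq : q ≠ T) (t : Strat Q A)
    (σB : FDist B) : valA δ dist T t q ≤
      ∑ q', step δ dist (t [] q) σB q q' * valA δ dist T (residual t [q]) q' := by
  refine le_of_forall_pos_le_add fun ε hε => ?_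
  choose sB hsB using fun q' =>
    exists_lt_of_ciInf_lt (lt_add_of_pos_right (valA δ dist T (residual t [q]) q') hε)
  let sB' := stratCons (fun _ => σB) (byStart sB)
  calc valA δ dist T t q ≤ reach δ dist T t sB' q := valA_le_reach ..
    _ ≤ ∑ q', step δ dist (t [] q) σB q q' * reach δ dist T (residual t [q]) (sB q') q' := by
        simpa only [sB', stratCons, residual_stratCons, reach_byStart] using
          reach_le_sum_step_mul_reach δ dist T hq t sB'
    _ ≤ ∑ q', step δ dist (t [] q) σB q q' * (valA δ dist T (residual t [q]) q' + ε) :=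
        sum_mul_mono (step_nonneg δ dist _ _ q) fun q' => (hsB q').le
    _ = _ := sum_mul_add_const (sum_step ..) ε

variable [Nonempty A]

theorem valA_le_of_Δop_le {v : Q → ℝ} (hv : 0 ≤ v) (hΔ : Δop δ dist T v ≤ v) (sA : Strat Q A)
    (q : Q) : valA δ dist T sA q ≤ v q := by
  have hT : 1 ≤ v T := by simpa [Δop] using hΔ T
  choose br hbr using fun (σ : FDist A) (q : Q) =>
    exists_outB_eq_valStratGF (locPay δ dist v q) σ
  let resp : Strat Q A → Strat Q B := fun s h q => dirac (br (s h q) q)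
  have hreach : ∀ n s q, reachN δ dist T n s (resp s) q ≤ v q := by
    intro n
    induction n with
    | zero =>
      intro s q
      by_cases hq : q = T
      · subst hq; rw [reachN_target]; exact hT
      · rw [reachN_zero_of_ne δ dist T hq]; exact hv q
    | succ n ih =>
      intro s q
      by_cases hq : q = T
      · subst hq; rw [reachN_target]; exact hT
      rw [reachN_succ_of_ne δ dist T hq]
      calc ∑ q', step δ dist (s [] q) (resp s [] q) q q' *
            reachN δ dist T n (residual s [q]) (resp (residual s [q])) q'
          ≤ ∑ q', step δ dist (s [] q) (resp s [] q) q q' * v q' :=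
            sum_mul_mono (step_nonneg δ dist _ _ q) fun q' => ih _ q'
        _ = valStratGF (locPay δ dist v q) (s [] q) := by
            rw [sum_step_mul, out_dirac, hbr]
        _ ≤ Δop δ dist T v q := by
            rw [Δop_of_ne δ dist T hq]; exact valStratGF_le_valGF _ _
        _ ≤ v q := hΔ q
  exact (valA_le_reach δ dist T sA (resp sA) q).trans (ciSup_le fun n => hreach n sA q)

theorem vseq_mem_Icc : ∀ n q, vseq δ dist T n q ∈ Set.Icc (0:ℝ) 1
  | 0, q => by by_cases hq : q = T <;> simp [vseq, hq]
  | n + 1, q => Δop_mem_Icc δ dist T (vseq_mem_Icc n) q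

theorem monotone_vseq : Monotone (vseq δ dist T) := by
  refine monotone_nat_of_le_succ fun n => ?_
  induction n with
  | zero =>
    intro q
    by_cases hq : q = T
    · simp [vseq, Δop, hq]
    · simpa [vseq, hq] using (vseq_mem_Icc δ dist T 1 q).1
  | succ n ih => exact Δop_mono δ dist T ih

theorem bddAbove_range_vseq (q : Q) : BddAbove (Set.range fun n => vseq δ dist T n q) :=
  ⟨1, Set.forall_mem_range.2 fun n => (vseq_mem_Icc δ dist T n q).2⟩

theorem Δop_iSup_vseq :
    Δop δ dist T (fun q => ⨆ n, vseq δ dist T n q) = fun q => ⨆ n, vseq δ dist T n q := by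
  have hbdd := bddAbove_range_vseq δ dist T
  funext q
  refine le_antisymm (le_of_forall_pos_le_add fun ε hε => ?_) (ciSup_le fun n => ?_)
  · obtain ⟨N, hN⟩ := (Filter.eventually_all.2 fun q' =>
      (tendsto_atTop_ciSup (fun _ _ h => monotone_vseq δ dist T h q') (hbdd q')).eventually_const_lt
        (sub_lt_self _ hε)).exists
    calc Δop δ dist T (fun q => ⨆ n, vseq δ dist T n q) q
        ≤ vseq δ dist T (N + 1) q + ε :=
          Δop_le_add δ dist T hε.le (fun q' => by linarith [hN q']) q
      _ ≤ (⨆ n, vseq δ dist T n q) + ε := by gcongr; exact le_ciSup (hbdd q) (N + 1)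
  · exact monotone_vseq δ dist T n.le_succ q |>.trans
      (Δop_mono δ dist T (fun q' => le_ciSup (hbdd q') n) q)

theorem exists_strat_vseq_le_reachN_add (n : ℕ) {ε : ℝ} (hε : 0 < ε) :
    ∃ s : Strat Q A, ∀ sB q, vseq δ dist T n q ≤ reachN δ dist T n s sB q + ε := by
  induction n generalizing ε with
  | zero =>
    refine ⟨Classical.arbitrary _, fun sB q => ?_⟩
    by_cases hq : q = T
    · subst hq; simp [vseq, reachN_target, hε.le]
    · simp [vseq, hq, reachN_zero_of_ne δ dist _ hq, hε.le]
  | succ n ih =>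
    obtain ⟨s, hs⟩ := ih (half_pos hε)
    choose σ hσ using fun q =>
      exists_lt_of_lt_ciSup (sub_lt_self (valGF (locPay δ dist (vseq δ dist T n) q)) (half_pos hε))
    refine ⟨stratCons σ s, fun sB q => ?_⟩
    by_cases hq : q = T
    · subst hq; simp [vseq, Δop, reachN_target, hε.le]
    rw [reachN_succ_of_ne δ dist T hq, residual_stratCons]
    calc vseq δ dist T (n + 1) q
        ≤ out (locPay δ dist (vseq δ dist T n) q) (σ q) (sB [] q) + ε / 2 := by
          rw [vseq, Δop_of_ne δ dist T hq]
          linarith [hσ q, valStratGF_le_out (locPay δ dist (vseq δ dist T n) q) (σ q) (sB [] q)]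
      _ = ∑ q', step δ dist (σ q) (sB [] q) q q' * vseq δ dist T n q' + ε / 2 := by
          rw [sum_step_mul]
      _ ≤ ∑ q', step δ dist (σ q) (sB [] q) q q' *
            (reachN δ dist T n s (residual sB [q]) q' + ε / 2) + ε / 2 := by
          gcongr with q'
          · exact step_nonneg ..
          · exact hs _ q'
      _ = _ := by rw [sum_mul_add_const (sum_step ..), add_assoc, add_halves]; rfl

theorem vseq_le_value (n : ℕ) (q : Q) : vseq δ dist T n q ≤ value δ dist T q := by
  refine le_of_forall_pos_le_add fun ε hε => ?_
  obtain ⟨s, hs⟩ := exists_strat_vseq_le_reachN_add δ dist T n hε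
  have hs' : vseq δ dist T n q - ε ≤ valA δ dist T s q := le_ciInf fun sB => by
    linarith [hs sB q, reachN_le_reach δ dist T n s sB q]
  linarith [valA_le_value δ dist T s q]

theorem value_eq_of_isLfpDelta {m : Q → ℝ} (hm : IsLfpDelta δ dist T m) : value δ dist T = m := by
  funext q
  refine le_antisymm
    (ciSup_le fun sA => valA_le_of_Δop_le δ dist T (fun q => (hm.1 q).1) hm.2.1.le sA q) ?_
  have hmem : ∀ q, (⨆ n, vseq δ dist T n q) ∈ Set.Icc (0:ℝ) 1 := fun q =>
    ⟨(vseq_mem_Icc δ dist T 0 q).1.trans (le_ciSup (bddAbove_range_vseq δ dist T q) 0),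
     ciSup_le fun n => (vseq_mem_Icc δ dist T n q).2⟩
  calc m q ≤ ⨆ n, vseq δ dist T n q := hm.2.2 _ hmem (Δop_iSup_vseq δ dist T) q
    _ ≤ value δ dist T q := ciSup_le fun n => vseq_le_value δ dist T n q

variable [DecidableEq B] (habs : Absorbing δ dist T) {m : Q → ℝ} (hm : IsLfpDelta δ dist T m)
include habs hm

theorem optimal_move_of_le_valA {s : Strat Q A} {h : List Q} {q : Q}
    (hq : m q ≤ valA δ dist T (residual s h) q) :
    s h q ∈ OptA (locPay δ dist m q) ∧
      ∀ b ∈ optActs (locPay δ dist m q) (s h q), ∀ q', 0 < step δ dist (s h q) (dirac b) q q' →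
        m q' ≤ valA δ dist T (residual s (h ++ [q])) q' := by
  have hub : ∀ q', valA δ dist T (residual s (h ++ [q])) q' ≤ m q' := fun q' =>
    (valA_le_value δ dist T _ q').trans_eq (congrFun (value_eq_of_isLfpDelta δ dist T hm) q')
  by_cases hqT : q = T
  · subst hqT
    have hpay : ∀ a b, locPay δ dist m q a b = m q := lift_of_absorbing δ dist habs m
    refine ⟨(valStratGF_const hpay _).trans (valGF_const hpay).symm, fun b _ q' hpos => ?_⟩
    rw [eq_of_step_pos_of_absorbing δ dist habs hpos, valA_target]
    exact (hm.1 q).2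
  have hval : valGF (locPay δ dist m q) = m q :=
    (Δop_of_ne δ dist T hqT).symm.trans (congrFun hm.2.1 q)
  have hle : ∀ σB, m q ≤ ∑ q', step δ dist (s h q) σB q q' *
      valA δ dist T (residual s (h ++ [q])) q' := fun σB => by
    simpa only [residual_residual, residual_apply_nil] using
      hq.trans (valA_le_sum_step_mul_valA_residual δ dist T hqT (residual s h) σB)
  have hopt : valStratGF (locPay δ dist m q) (s h q) = m q := by
    refine le_antisymm ((valStratGF_le_valGF _ _).trans hval.le)
      (le_ciInf fun σB => (hle σB).trans ?_)
    rw [← sum_step_mul]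
    exact sum_mul_mono (step_nonneg δ dist _ _ q) hub
  refine ⟨hopt.trans hval.symm,
    fun b hb q' hpos => le_of_sum_mul_le (step_nonneg δ dist _ _ q) hub ?_ hpos⟩
  calc ∑ q', step δ dist (s h q) (dirac b) q q' * m q' = m q := by
        rw [sum_step_mul, out_dirac]; exact hb.trans hopt
    _ ≤ _ := hle (dirac b)

theorem le_valA_residual_of_relevant {sA : Strat Q A} {q₀ : Q}
    (hopt : valA δ dist T sA q₀ = value δ dist T q₀) {h : List Q} {q : Q}
    (hrel : Relevant δ dist m sA q₀ h q) : m q ≤ valA δ dist T (residual sA h) q := by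
  induction hrel with
  | base => exact (hopt.trans (congrFun (value_eq_of_isLfpDelta δ dist T hm) q₀)).ge
  | step _ hmove ih =>
    obtain ⟨b, hb, hpos⟩ := hmove
    exact (optimal_move_of_le_valA δ dist T habs hm ih).2 b hb _ hpos

end Value

end CRG

theorem stmt15_general
    {A B Q D : Type} [Fintype A] [Fintype B] [Fintype Q]
    [Nonempty A] [Nonempty B] [DecidableEq B]
    (δ : Q → A → B → D) (dist : D → FDist Q) (T : Q)
    (habs : CRG.Absorbing δ dist T)
    (m : Q → ℝ) (hm : CRG.IsLfpDelta δ dist T m)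
    (sA : CRG.Strat Q A) (q₀ : Q)
    (hopt : CRG.valA δ dist T sA q₀ = CRG.value δ dist T q₀) :
    ∀ (h : List Q) (q' : Q), CRG.Relevant δ dist m sA q₀ h q' →
      sA h q' ∈ CRG.OptA (CRG.locPay δ dist m q') ∧
      ∀ b ∈ CRG.optActs (CRG.locPay δ dist m q') (sA h q'),
        ∀ q'' : Q, 0 < CRG.step δ dist (sA h q') (CRG.dirac b) q' q'' →
          CRG.valA δ dist T (CRG.residual sA (h ++ [q'])) q'' =
            CRG.value δ dist T q'' := by
  intro h q' hrel
  obtain ⟨hlocal, hsucc⟩ := CRG.optimal_move_of_le_valA δ dist T habs hm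
    (CRG.le_valA_residual_of_relevant δ dist T habs hm hopt hrel)
  refine ⟨hlocal, fun b hb q'' hpos => le_antisymm (CRG.valA_le_value δ dist T _ q'') ?_⟩
  rw [CRG.value_eq_of_isLfpDelta δ dist T hm]
  exact hsucc b hb q'' hpos

/-- an optimal Player A strategy plays, along every relevant path, local
strategies that are optimal in the local interaction, and its residual strategies
remain optimal from every state reachable through an optimal Player B action. -/
theorem stmt15
    {A B Q D : Type} [Fintype A] [Fintype B] [Fintype Q] [Fintype D]
    [Nonempty A] [Nonempty B] [Nonempty Q] [Nonempty D] [DecidableEq Q] [DecidableEq B]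
    (δ : Q → A → B → D) (dist : D → FDist Q) (T : Q)
    (habs : CRG.Absorbing δ dist T)
    (m : Q → ℝ) (hm : CRG.IsLfpDelta δ dist T m)
    (sA : CRG.Strat Q A) (q₀ : Q)
    (hopt : CRG.valA δ dist T sA q₀ = CRG.value δ dist T q₀) :
    ∀ (h : List Q) (q' : Q), CRG.Relevant δ dist m sA q₀ h q' →
      sA h q' ∈ CRG.OptA (CRG.locPay δ dist m q') ∧
      ∀ b ∈ CRG.optActs (CRG.locPay δ dist m q') (sA h q'),
        ∀ q'' : Q, 0 < CRG.step δ dist (sA h q') (CRG.dirac b) q' q'' →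
          CRG.valA δ dist T (CRG.residual sA (h ++ [q'])) q'' =
            CRG.value δ dist T q'' :=
  stmt15_general δ dist T habs m hm sA q₀ hopt
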